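/- arXiv:2604.07104 — 4 statements merged into one kernel-verified Lean document; each statement's English description precedes it below -/
import Mathlib

section
/- Let a ≥ 1 and b ≥ 1 be integers, and let x be an integer with a + 1 ≤ x ≤ a + b. Then (a + b + 1 − x) · C(x, a) ≥ a·b + 1. -/
lemma choose_ge_aux (a t : ℕ) : a * t + 1 ≤ (a + t).choose a := by
  induction a generalizing t with
  | zero => simp
  | succ a ih =>
    induction t with
    | zero => simp
    | succ t iht =>
      have h1 := ih (t + 1)
      have h2 := iht
      have heq : (a + 1 + (t + 1)).choose (a + 1)
          = (a + t + 1).choose a + (a + t + 1).choose (a + 1) := by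
        rw [show a + 1 + (t + 1) = (a + t + 1) + 1 by ring, Nat.choose_succ_succ]
      rw [heq]
      have : a + (t + 1) = a + t + 1 := by ring
      rw [this] at h1
      have : a + 1 + t = a + t + 1 := by ring
      rw [this] at h2
      nlinarith

theorem binom_convex_ineq (a b x : ℕ) (ha : 1 ≤ a) (hb : 1 ≤ b)
    (hx1 : a + 1 ≤ x) (hx2 : x ≤ a + b) :
    (a + b + 1 - x) * x.choose a ≥ a * b + 1 := by
  obtain ⟨t, rfl⟩ : ∃ t, x = a + t := ⟨x - a, by omega⟩
  have ht1 : 1 ≤ t := by omega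
  have ht2 : t ≤ b := by omega
  have hc := choose_ge_aux a t
  have hsub : a + b + 1 - (a + t) = b + 1 - t := by omega
  rw [hsub]
  set u := b + 1 - t with hu
  have hu1 : 1 ≤ u := by omega
  have hkey : t * u ≥ b := by
    have hsu : u = b + 1 - t := hu
    obtain ⟨s, hs⟩ := Nat.exists_eq_add_of_le ht2
    have : u = s + 1 := by omega
    subst hs; rw [this]; nlinarith
  have hab : a * b ≤ a * (t * u) := Nat.mul_le_mul_left a hkey
  calc u * (a + t).choose a ≥ u * (a * t + 1) := Nat.mul_le_mul_left _ hc
    _ ≥ a * b + 1 := by nlinarith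
end

section
/- Let r ≥ 1 and δ ≥ 1 be integers, and let H be a nonempty r-uniform hypergraph such that every (r−1)-element subset of vertices that is contained in at least one edge is contained in at least δ edges. Then |E(H)| ≥ C(r + δ − 1, r). -/
/-!
Fix a vertex `v` of some edge. The edges through `v`, with `v` deleted, form an `(r-1)`-uniform
family whose positive codegrees are still at least `δ`. The edges avoiding `v` form an `r`-uniform
family whose positive codegrees are at least `δ - 1`, since an `(r-1)`-set not containing `v` lies
in at most one edge through `v`; for `δ ≥ 2` this family is nonempty. Induction on `r + δ` and
Pascal's rule `C(r+δ-1, r) = C(r+δ-2, r-1) + C(r+δ-2, r)` finish the proof.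
-/

open Finset

namespace Finset

variable {α : Type*} [DecidableEq α]

def CodegreeAtLeast (H : Finset (Finset α)) (s δ : ℕ) : Prop :=
  ∀ U : Finset α, #U = s → {e ∈ H | U ⊆ e}.Nonempty → δ ≤ #{e ∈ H | U ⊆ e}

variable {H : Finset (Finset α)} {U W : Finset α} {v : α} {r s δ : ℕ}

lemma card_filter_superset_le_one (hH : (H : Set (Finset α)).Sized r) (hW : #W = r) :
    #{e ∈ H | W ⊆ e} ≤ 1 := by
  refine (card_le_card fun e he => ?_).trans (card_singleton W).le
  rw [mem_filter] at he
  exact mem_singleton.2 (eq_of_subset_of_card_le he.2 (by rw [hH he.1, hW])).symm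

lemma card_filter_superset_memberSubfamily (hv : v ∉ U) :
    #{f ∈ H.memberSubfamily v | U ⊆ f} = #{e ∈ H | insert v U ⊆ e} := by
  refine card_nbij' (insert v) (·.erase v) ?_ ?_ ?_ ?_
  · intro f hf
    simp only [mem_coe, mem_filter, mem_memberSubfamily] at hf ⊢
    exact ⟨hf.1.1, insert_subset_insert v hf.2⟩
  · intro e he
    simp only [mem_coe, mem_filter, mem_memberSubfamily, insert_subset_iff] at he ⊢
    rw [insert_erase he.2.1, subset_erase]
    exact ⟨⟨he.1, notMem_erase v e⟩, he.2.2, hv⟩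
  · intro f hf
    simp only [mem_coe, mem_filter, mem_memberSubfamily] at hf
    exact erase_insert hf.1.2
  · intro e he
    simp only [mem_coe, mem_filter, insert_subset_iff] at he
    exact insert_erase he.2.1

lemma card_filter_superset_nonMemberSubfamily_add :
    #{e ∈ H.nonMemberSubfamily v | U ⊆ e} + #{e ∈ H | insert v U ⊆ e} = #{e ∈ H | U ⊆ e} := by
  rw [← card_filter_add_card_filter_not (s := {e ∈ H | U ⊆ e}) (fun e => v ∉ e),
    nonMemberSubfamily, filter_filter, filter_filter, filter_filter]
  congr 2 <;> ext e <;> simp only [mem_filter, insert_subset_iff, not_not] <;> tauto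

lemma card_filter_superset_le_card_nonMemberSubfamily_add_one
    (hH : (H : Set (Finset α)).Sized (s + 1)) (hU : #U = s) (hv : v ∉ U) :
    #{e ∈ H | U ⊆ e} ≤ #{e ∈ H.nonMemberSubfamily v | U ⊆ e} + 1 := by
  rw [← card_filter_superset_nonMemberSubfamily_add (v := v)]
  exact add_le_add_right (card_filter_superset_le_one hH (by rw [card_insert_of_notMem hv, hU])) _

lemma _root_.Set.Sized.memberSubfamily (hH : (H : Set (Finset α)).Sized (s + 1)) :
    (H.memberSubfamily v : Set (Finset α)).Sized s := by
  intro f hf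
  rw [mem_coe, mem_memberSubfamily] at hf
  have := hH (mem_coe.2 hf.1)
  rwa [card_insert_of_notMem hf.2, Nat.add_right_cancel_iff] at this

lemma _root_.Set.Sized.nonMemberSubfamily (hH : (H : Set (Finset α)).Sized r) :
    (H.nonMemberSubfamily v : Set (Finset α)).Sized r :=
  hH.mono (coe_subset.2 (filter_subset _ H))

lemma CodegreeAtLeast.memberSubfamily (h : H.CodegreeAtLeast (s + 1) δ) :
    (H.memberSubfamily v).CodegreeAtLeast s δ := by
  rintro U hU ⟨f, hf⟩
  rw [mem_filter, mem_memberSubfamily] at hf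
  have hv : v ∉ U := fun hvU => hf.1.2 (hf.2 hvU)
  rw [card_filter_superset_memberSubfamily hv]
  refine h _ (by rw [card_insert_of_notMem hv, hU]) ⟨insert v f, ?_⟩
  exact mem_filter.2 ⟨hf.1.1, insert_subset_insert v hf.2⟩

lemma CodegreeAtLeast.nonMemberSubfamily (hH : (H : Set (Finset α)).Sized (s + 1))
    (h : H.CodegreeAtLeast s δ) : (H.nonMemberSubfamily v).CodegreeAtLeast s (δ - 1) := by
  rintro U hU ⟨e, he⟩
  rw [mem_filter, mem_nonMemberSubfamily] at he
  have hv : v ∉ U := fun hvU => he.1.2 (he.2 hvU)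
  have hδ := h U hU ⟨e, mem_filter.2 ⟨he.1.1, he.2⟩⟩
  have := card_filter_superset_le_card_nonMemberSubfamily_add_one hH hU hv
  omega

lemma nonMemberSubfamily_nonempty (hH : (H : Set (Finset α)).Sized (s + 1))
    (h : H.CodegreeAtLeast s δ) (hδ : 2 ≤ δ) {e : Finset α} (he : e ∈ H) (hv : v ∈ e) :
    (H.nonMemberSubfamily v).Nonempty := by
  have hU : #(e.erase v) = s := by rw [card_erase_of_mem hv, hH (mem_coe.2 he), Nat.add_sub_cancel]
  have hcodeg := h _ hU ⟨e, mem_filter.2 ⟨he, erase_subset v e⟩⟩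
  have := card_filter_superset_le_card_nonMemberSubfamily_add_one hH hU (notMem_erase v e)
  exact (card_pos.1 (by omega : 0 < #{f ∈ H.nonMemberSubfamily v | e.erase v ⊆ f})).mono
    (filter_subset _ _)

theorem choose_le_card_of_codegreeAtLeast (hne : H.Nonempty)
    (hH : (H : Set (Finset α)).Sized (s + 1)) (h : H.CodegreeAtLeast s δ) :
    (s + δ).choose (s + 1) ≤ #H := by
  induction s generalizing δ H with
  | zero =>
    have hall : {e ∈ H | (∅ : Finset α) ⊆ e} = H := filter_true_of_mem fun e _ => empty_subset e
    simpa [hall] using h ∅ card_empty (by rwa [hall])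
  | succ t ihs =>
    induction δ generalizing H with
    | zero => simp
    | succ d ihd =>
      obtain ⟨e, he⟩ := hne
      obtain ⟨v, hv⟩ : e.Nonempty := card_pos.1 (by rw [hH (mem_coe.2 he)]; omega)
      have hlink : (t + (d + 1)).choose (t + 1) ≤ #(H.memberSubfamily v) :=
        ihs ⟨e.erase v, mem_memberSubfamily.2 ⟨by rwa [insert_erase hv], notMem_erase v e⟩⟩
          hH.memberSubfamily h.memberSubfamily
      have hrest : (t + 1 + d).choose (t + 1 + 1) ≤ #(H.nonMemberSubfamily v) := by
        rcases d with _ | d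
        · simp
        · exact ihd (nonMemberSubfamily_nonempty hH h (by omega) he hv) hH.nonMemberSubfamily
            (h.nonMemberSubfamily hH)
      calc (t + 1 + (d + 1)).choose (t + 1 + 1)
          = (t + (d + 1)).choose (t + 1) + (t + 1 + d).choose (t + 1 + 1) := by
            rw [show t + 1 + (d + 1) = t + 1 + d + 1 by omega, Nat.choose_succ_succ,
              show t + 1 + d = t + (d + 1) by omega]
        _ ≤ #(H.memberSubfamily v) + #(H.nonMemberSubfamily v) := add_le_add hlink hrest
        _ = #H := card_memberSubfamily_add_card_nonMemberSubfamily v H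

end Finset

theorem edges_lower_bound_of_min_codegree_general {α : Type*} [DecidableEq α]
    (r δ : ℕ)
    (H : Finset (Finset α)) (hne : H.Nonempty)
    (hunif : ∀ e ∈ H, e.card = r)
    (hcodeg : ∀ U : Finset α, U.card = r - 1 →
      (H.filter fun e => U ⊆ e).Nonempty → δ ≤ (H.filter fun e => U ⊆ e).card) :
    (r + δ - 1).choose r ≤ H.card := by
  cases r with
  | zero => simpa using hne.card_pos
  | succ s =>
    rw [show s + 1 + δ - 1 = s + δ by omega]
    exact choose_le_card_of_codegreeAtLeast hne (fun e he => hunif e he) hcodeg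

theorem edges_lower_bound_of_min_codegree {α : Type*} [DecidableEq α]
    (r δ : ℕ) (hr : 1 ≤ r) (hδ : 1 ≤ δ)
    (H : Finset (Finset α)) (hne : H.Nonempty)
    (hunif : ∀ e ∈ H, e.card = r)
    (hcodeg : ∀ U : Finset α, U.card = r - 1 →
      (H.filter fun e => U ⊆ e).Nonempty → δ ≤ (H.filter fun e => U ⊆ e).card) :
    (r + δ - 1).choose r ≤ H.card :=
  edges_lower_bound_of_min_codegree_general r δ H hne hunif hcodeg
end

section
/- Let r ≥ 1, 0 ≤ m ≤ r, δ ≥ 1 be integers, and let H be a nonempty r-uniform hypergraph such that every m-element vertex subset contained in at least one edge of H is contained in at least δ edges. Let n ≥ |V(H)| and let F be a weakly H-saturated r-uniform hypergraph on n vertices. Then every m-element subset U of the n vertices is contained in at least δ − 1 edges of F; consequently |E(F)| ≥ (δ−1)·C(n, m)/C(r, m). -/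
open Finset

/-- `e` belongs to a copy of `H` inside `G`. -/
def IsCopyAt {α β : Type*} [DecidableEq α] [DecidableEq β]
    (H : Finset (Finset α)) (G : Finset (Finset β)) (e : Finset β) : Prop :=
  ∃ f : α ↪ β, (∀ d ∈ H, d.image f ∈ G) ∧ ∃ d ∈ H, d.image f = e

/-- `F` is weakly `H`-saturated in the complete `r`-uniform hypergraph on `β`. -/
def WSat {α β : Type*} [DecidableEq α] [DecidableEq β] [Fintype β]
    (r : ℕ) (H : Finset (Finset α)) (F : Finset (Finset β)) : Prop :=
  ∃ l : List (Finset β), l.Nodup ∧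
    (∀ e : Finset β, e ∈ l ↔ (e.card = r ∧ e ∉ F)) ∧
    ∀ i : Fin l.length, IsCopyAt H (F ∪ (l.take (i + 1)).toFinset) (l.get i)

/-! Fix an `m`-set `U`. If some added edge contains `U`, the first such edge `e` completes a
copy of `H` in which `U` is the image of an `m`-subset `U'` of an edge of `H`. The at least `δ`
images of the edges of `H` through `U'` all contain `U`, and all but `e` are edges of `F`, since
an earlier added edge would contain `U`. Otherwise every `r`-set containing `U` is already in `F`;
there are `C(n - m, r - m) ≥ C(|V(H)| - m, r - m)` of them, at least the number of edges of `H`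
through an `m`-subset of an edge of `H`. Double counting the pairs `U ⊆ e ∈ F` gives the bound
on `|F|`. -/

theorem List.exists_getElem_and_forall_mem_take_not {γ : Type*} {l : List γ}
    {p : γ → Prop} (h : ∃ e ∈ l, p e) :
    ∃ i, ∃ hi : i < l.length, p l[i] ∧ ∀ e ∈ l.take i, ¬ p e := by
  classical
  obtain ⟨b, hb⟩ := Option.isSome_iff_exists.1
    (List.find?_isSome (p := fun e => decide (p e)) |>.2 (by simpa using h))
  obtain ⟨hpb, as, bs, rfl, has⟩ := List.find?_eq_some_iff_append.1 hb
  exact ⟨as.length, by simp, by simpa using hpb, by simpa using has⟩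

theorem List.filter_toFinset_take_add_one_subset {γ : Type*} [DecidableEq γ] {l : List γ}
    {p : γ → Prop} [DecidablePred p] {i : ℕ} (hi : i < l.length)
    (hfirst : ∀ e ∈ l.take i, ¬ p e) : (l.take (i + 1)).toFinset.filter p ⊆ {l[i]} := by
  intro e he
  rw [← List.take_concat_get' l i hi] at he
  simp only [Finset.mem_filter, List.mem_toFinset, List.mem_append, List.mem_singleton] at he
  obtain ⟨he | rfl, hpe⟩ := he
  · exact absurd hpe (hfirst e he)
  · exact Finset.mem_singleton_self _

section

variable {α β : Type*} [DecidableEq α] [DecidableEq β]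

theorem IsCopyAt.le_card_filter_superset {H : Finset (Finset α)} {G : Finset (Finset β)}
    {e U : Finset β} {δ : ℕ}
    (hdeg : ∀ U' : Finset α, #U' = #U →
      (H.filter (U' ⊆ ·)).Nonempty → δ ≤ #(H.filter (U' ⊆ ·)))
    (hcopy : IsCopyAt H G e) (hU : U ⊆ e) : δ ≤ #(G.filter (U ⊆ ·)) := by
  obtain ⟨f, hfG, d₀, hd₀, rfl⟩ := hcopy
  have hU' : (d₀.filter (f · ∈ U)).image f = U := by
    rw [← filter_image (p := (· ∈ U)), filter_mem_eq_inter, inter_eq_right.2 hU]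
  set U' := d₀.filter (f · ∈ U)
  have hcard : #U' = #U := by rw [← hU', card_image_of_injective _ f.injective]
  calc δ ≤ #(H.filter (U' ⊆ ·)) :=
        hdeg U' hcard ⟨d₀, mem_filter.2 ⟨hd₀, filter_subset _ _⟩⟩
    _ ≤ #(G.filter (U ⊆ ·)) := by
      refine card_le_card_of_injOn (·.image f) (fun d hd => ?_)
        ((image_injective f.injective).injOn)
      rw [coe_filter] at hd
      exact mem_filter.2 ⟨hfG d hd.1, hU' ▸ image_subset_image hd.2⟩

theorem le_card_filter_superset_of_forall_superset_mem [Fintype β] {r m δ : ℕ}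
    {H : Finset (Finset α)} {F : Finset (Finset β)} (hne : H.Nonempty)
    (hunif : ∀ e ∈ H, #e = r) (hm : m ≤ r)
    (hdeg : ∀ U : Finset α, #U = m →
      (H.filter (U ⊆ ·)).Nonempty → δ ≤ #(H.filter (U ⊆ ·)))
    (hn : #(H.sup id) ≤ Fintype.card β) {U : Finset β} (hU : #U = m)
    (hall : ∀ e : Finset β, #e = r → U ⊆ e → e ∈ F) : δ ≤ #(F.filter (U ⊆ ·)) := by
  obtain ⟨e₀, he₀⟩ := hne
  obtain ⟨U₀, hU₀e₀, hU₀⟩ := exists_subset_card_eq (hm.trans (hunif e₀ he₀).ge)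
  have hsup : ∀ e ∈ H, e ⊆ H.sup id := fun e he => le_sup (f := id) he
  calc δ ≤ #(H.filter (U₀ ⊆ ·)) := hdeg U₀ hU₀ ⟨e₀, mem_filter.2 ⟨he₀, hU₀e₀⟩⟩
    _ ≤ #(((H.sup id).powersetCard r).filter (U₀ ⊆ ·)) :=
      card_le_card <| filter_subset_filter _ fun e he =>
        mem_powersetCard.2 ⟨hsup e he, hunif e he⟩
    _ = (#(H.sup id) - m).choose (r - m) := by
      rw [card_filter_powersetCard_subset _ _ _ (hU₀e₀.trans (hsup e₀ he₀)) (hU₀ ▸ hm),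
        hU₀]
    _ ≤ (Fintype.card β - m).choose (r - m) := Nat.choose_le_choose _ (by omega)
    _ = #((univ.powersetCard r).filter (U ⊆ ·)) := by
      rw [card_filter_powersetCard_subset _ _ _ (subset_univ U) (hU ▸ hm), card_univ, hU]
    _ ≤ #(F.filter (U ⊆ ·)) := by
      refine card_le_card fun e he => ?_
      rw [mem_filter, mem_powersetCard] at he
      exact mem_filter.2 ⟨hall e he.1.2 he.2, he.2⟩

theorem WSat.le_card_filter_superset_add_one [Fintype β] {r m δ : ℕ}
    {H : Finset (Finset α)} {F : Finset (Finset β)} (hF : WSat r H F) (hne : H.Nonempty)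
    (hunif : ∀ e ∈ H, #e = r) (hm : m ≤ r)
    (hdeg : ∀ U : Finset α, #U = m →
      (H.filter (U ⊆ ·)).Nonempty → δ ≤ #(H.filter (U ⊆ ·)))
    (hn : #(H.sup id) ≤ Fintype.card β) {U : Finset β} (hU : #U = m) :
    δ ≤ #(F.filter (U ⊆ ·)) + 1 := by
  obtain ⟨l, -, hmem, hcopy⟩ := hF
  by_cases hadded : ∃ e ∈ l, U ⊆ e
  · obtain ⟨i, hi, hUi, hfirst⟩ := List.exists_getElem_and_forall_mem_take_not hadded
    have hnew : (F ∪ (l.take (i + 1)).toFinset).filter (U ⊆ ·) ⊆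
        insert l[i] (F.filter (U ⊆ ·)) := by
      rw [filter_union, insert_eq, union_comm {l[i]}]
      exact union_subset_union_right
        (List.filter_toFinset_take_add_one_subset (p := (U ⊆ ·)) hi hfirst)
    calc δ ≤ #((F ∪ (l.take (i + 1)).toFinset).filter (U ⊆ ·)) :=
          (hcopy ⟨i, hi⟩).le_card_filter_superset (hU ▸ hdeg) hUi
      _ ≤ #(insert l[i] (F.filter (U ⊆ ·))) := card_le_card hnew
      _ ≤ #(F.filter (U ⊆ ·)) + 1 := card_insert_le _ _
  · push Not at hadded
    have hall : ∀ e : Finset β, #e = r → U ⊆ e → e ∈ F := fun e he heU =>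
      not_not.1 fun heF => hadded e ((hmem e).2 ⟨he, heF⟩) heU
    exact (le_card_filter_superset_of_forall_superset_mem hne hunif hm hdeg hn hU hall).trans
      (Nat.le_succ _)

theorem choose_mul_le_card_mul_choose [Fintype β] {r m k : ℕ} {F : Finset (Finset β)}
    (hunif : ∀ e ∈ F, #e = r)
    (hdeg : ∀ U : Finset β, #U = m → k ≤ #(F.filter (U ⊆ ·))) :
    (Fintype.card β).choose m * k ≤ #F * r.choose m := by
  rw [← card_univ, ← card_powersetCard]
  refine card_mul_le_card_mul (fun U e : Finset β => U ⊆ e)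
    (fun U hU => hdeg U (mem_powersetCard.1 hU).2) fun e he => ?_
  rw [← hunif e he, ← card_powersetCard]
  refine card_le_card fun U hU => ?_
  rw [mem_bipartiteBelow, mem_powersetCard] at hU
  exact mem_powersetCard.2 ⟨hU.2, hU.1.2⟩

end

theorem wsat_lower_bound_via_delta_m_general {α : Type*} [DecidableEq α]
    (r m δ n : ℕ) (hm : m ≤ r)
    (H : Finset (Finset α)) (hne : H.Nonempty)
    (hunif : ∀ e ∈ H, e.card = r)
    (hdeg : ∀ U : Finset α, U.card = m →
      (H.filter fun e => U ⊆ e).Nonempty → δ ≤ (H.filter fun e => U ⊆ e).card)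
    (hn : (H.sup id).card ≤ n)
    (F : Finset (Finset (Fin n)))
    (hFunif : ∀ e ∈ F, e.card = r)
    (hF : WSat r H F) :
    (∀ U : Finset (Fin n), U.card = m →
        δ - 1 ≤ (F.filter fun e => U ⊆ e).card) ∧
      ((δ : ℝ) - 1) * n.choose m / r.choose m ≤ F.card := by
  have hcodeg : ∀ U : Finset (Fin n), #U = m → δ - 1 ≤ #(F.filter (U ⊆ ·)) := fun U hU =>
    Nat.sub_le_of_le_add
      (hF.le_card_filter_superset_add_one hne hunif hm hdeg (by rwa [Fintype.card_fin]) hU)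
  refine ⟨hcodeg, ?_⟩
  have hcount := choose_mul_le_card_mul_choose hFunif hcodeg
  rw [Fintype.card_fin] at hcount
  have hδ : (δ : ℝ) - 1 ≤ ((δ - 1 : ℕ) : ℝ) := by
    rw [sub_le_iff_le_add]
    exact_mod_cast (by omega : δ ≤ δ - 1 + 1)
  rw [div_le_iff₀ (by exact_mod_cast Nat.choose_pos hm)]
  calc ((δ : ℝ) - 1) * n.choose m ≤ ((δ - 1 : ℕ) : ℝ) * n.choose m := by gcongr
    _ ≤ F.card * r.choose m := by rw [mul_comm]; exact_mod_cast hcount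

theorem wsat_lower_bound_via_delta_m {α : Type*} [DecidableEq α]
    (r m δ n : ℕ) (hr : 1 ≤ r) (hm : m ≤ r) (hδ : 1 ≤ δ)
    (H : Finset (Finset α)) (hne : H.Nonempty)
    (hunif : ∀ e ∈ H, e.card = r)
    (hdeg : ∀ U : Finset α, U.card = m →
      (H.filter fun e => U ⊆ e).Nonempty → δ ≤ (H.filter fun e => U ⊆ e).card)
    (hn : (H.sup id).card ≤ n)
    (F : Finset (Finset (Fin n)))
    (hFunif : ∀ e ∈ F, e.card = r)
    (hF : WSat r H F) :
    (∀ U : Finset (Fin n), U.card = m →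
        δ - 1 ≤ (F.filter fun e => U ⊆ e).card) ∧
      ((δ : ℝ) - 1) * n.choose m / r.choose m ≤ F.card :=
  wsat_lower_bound_via_delta_m_general r m δ n hm H hne hunif hdeg hn F hFunif hF
end

section
/- Let r ≥ 1, δ ≥ 2, e ≥ 1, a ≥ 1 be integers with a ≤ (r−1)(δ−1) + 1 and e ≤ C(r+δ−1, r) − a. Let G be an r-uniform hypergraph with e edges. Then δ·|∂_{r−1}(G)| − r·e ≥ a. -/
/-!
By Kruskal–Katona, among `r`-uniform families with `e` edges the shadow is smallest for the
initial segment of colex ending at some `r`-set `s`, so it suffices to treat these segments.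
If `M = max s` has `m` predecessors, the segment consists of all `r`-subsets of `{x < M}`
together with `M` adjoined to the segment ending at `s \ {M}`, and its shadow splits in the same
way with `r - 1` in place of `r`. Since `r · C(m, r) = (m - r + 1) · C(m, r - 1)`, this turns the
bound for `s` into the bound for `s \ {M}` plus an inequality between binomial coefficients, and
the theorem follows by induction on `r`.
-/

open Finset

/-- The `m`-shadow of a hypergraph: all `m`-element vertex subsets contained in some edge. -/
def hyperShadow {α : Type*} [DecidableEq α] (m : ℕ) (H : Finset (Finset α)) :
    Finset (Finset α) :=
  H.sup fun e => e.powersetCard m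

open scoped FinsetFamily

theorem Nat.mul_add_one_le_choose_add (x y : ℕ) : x * y + 1 ≤ (x + y).choose x := by
  induction y with
  | zero => simp
  | succ y ih =>
    rcases x with _ | x
    · simp
    · have hpascal : (x + 1 + (y + 1)).choose (x + 1) =
          (x + 1 + y).choose x + (x + 1 + y).choose (x + 1) := Nat.choose_succ_succ _ _
      have hx : x + 1 ≤ (x + 1 + y).choose x :=
        calc x + 1 = (x + 1).choose x := (Nat.choose_succ_self_right x).symm
          _ ≤ (x + 1 + y).choose x := Nat.choose_le_choose x (by omega)
      rw [hpascal]
      linarith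

/-- The inequality of the theorem for `r = k + 1`, `e` edges and a shadow of size `t`. -/
def ShadowBound (k δ e t : ℕ) : Prop :=
  ∀ a : ℕ, 1 ≤ a → a ≤ k * (δ - 1) + 1 → e + a ≤ (k + δ).choose (k + 1) →
    (a : ℤ) ≤ δ * t - (k + 1) * e

theorem ShadowBound.mono {k δ e t t' : ℕ} (h : ShadowBound k δ e t) (ht : t ≤ t') :
    ShadowBound k δ e t' := fun a ha haδ hsize => by
  have : (δ : ℤ) * t ≤ δ * t' := by gcongr
  linarith [h a ha haδ hsize]

theorem shadowBound_zero (δ e : ℕ) : ShadowBound 0 δ e 1 := by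
  intro a ha haδ hsize
  simp only [zero_add, Nat.choose_one_right, zero_mul] at hsize haδ
  push_cast
  omega

theorem ShadowBound.succ {k δ m e₁ t₁ : ℕ} (h : ShadowBound k δ e₁ t₁) (hkm : k + 1 ≤ m)
    (he₁ : e₁ ≤ m.choose (k + 1)) :
    ShadowBound (k + 1) δ (m.choose (k + 2) + e₁) (m.choose (k + 1) + t₁) := by
  intro a ha haδ hsize
  rw [show k + 1 + 1 = k + 2 from rfl] at hsize
  unfold ShadowBound at h
  obtain ⟨d, rfl⟩ : ∃ d, m = k + 1 + d := ⟨m - (k + 1), by omega⟩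
  set c := (k + 1 + d).choose (k + 1)
  have hupper : ((k + 1 + d).choose (k + 2) : ℤ) * (k + 2) = c * d := by
    exact_mod_cast (by simpa using Nat.choose_succ_right_eq (k + 1 + d) (k + 1))
  obtain ⟨j, rfl⟩ : ∃ j, δ = d + 1 + j := by
    refine ⟨δ - (d + 1), ?_⟩
    by_contra! hlt
    have := Nat.choose_le_choose (k + 2) (show k + 1 + δ ≤ k + 1 + d by omega)
    omega
  set B := (k + (d + 1 + j)).choose (k + 1)
  have hB : (k + 1) * (d + j) + 1 ≤ B := by
    simpa [B, show k + 1 + (d + j) = k + (d + 1 + j) by omega] using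
      Nat.mul_add_one_le_choose_add (k + 1) (d + j)
  rw [show d + 1 + j - 1 = d + j by omega] at haδ h
  rcases j with _ | j
  -- `m = k + δ`: by Pascal's rule `hsize` says `e₁ + a ≤ c`.
  · have hpascal : (k + 1 + (d + 1 + 0)).choose (k + 2) = B + (k + 1 + d).choose (k + 2) := by
      simp only [B, show k + 1 + (d + 1 + 0) = (k + 1 + d) + 1 by omega,
        show k + (d + 1 + 0) = k + 1 + d by omega]
      exact Nat.choose_succ_succ _ _
    have hcB : c = B := by simp only [c, B]; congr 1; omega
    have := h 1 le_rfl (by omega) (by omega)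
    push_cast at this ⊢
    linarith
  -- `m < k + δ`: the excess `(δ - d) c - e₁ = (j + 2) c - e₁` is at least `δ - 1` and at least
  -- `e₁`, which handles either value of the minimum below.
  · have hcB : c < B := by
      have hpascal : B = (k + d + 1 + j).choose k + (k + d + 1 + j).choose (k + 1) := by
        simp only [B, show k + (d + 1 + (j + 1)) = (k + d + 1 + j) + 1 by omega]
        exact Nat.choose_succ_succ _ _
      have := Nat.choose_pos (show k ≤ k + d + 1 + j by omega)
      have := Nat.choose_le_choose (k + 1) (show k + 1 + d ≤ k + d + 1 + j by omega)
      omega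
    have hc : d + 1 ≤ c := by
      have := Nat.mul_add_one_le_choose_add (k + 1) d
      nlinarith
    have he₁c : (e₁ : ℤ) ≤ c := by exact_mod_cast he₁
    have hX₁ : (d + j + 1 : ℤ) ≤ (j + 2) * c - e₁ := by
      have : ((j + 1) * (d + 1) : ℤ) ≤ (j + 1) * c := by gcongr; exact_mod_cast hc
      nlinarith
    have hX₂ : (e₁ : ℤ) ≤ (j + 2) * c - e₁ := by nlinarith
    have := h (min (k * (d + (j + 1)) + 1) (B - e₁)) (by omega) (min_le_left _ _) (by omega)
    rcases min_cases (k * (d + (j + 1)) + 1) (B - e₁) with ⟨hmin, -⟩ | ⟨hmin, -⟩ <;>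
      rw [hmin] at this <;> push_cast [he₁.trans hcB.le] at this ⊢ <;> linarith

namespace Finset.Colex

variable {α : Type*} [LinearOrder α] [Fintype α]

theorem exists_isInitSeg_card {r e : ℕ} (he : e ≤ (Fintype.card α).choose r) :
    ∃ 𝒜 : Finset (Finset α), IsInitSeg 𝒜 r ∧ #𝒜 = e := by
  induction e with
  | zero => exact ⟨∅, isInitSeg_empty, card_empty⟩
  | succ e ih =>
    obtain ⟨𝒜, h𝒜, rfl⟩ := ih (by omega)
    have hsub : 𝒜 ⊆ powersetCard r univ := fun t ht =>
      mem_powersetCard.2 ⟨subset_univ t, h𝒜.1 ht⟩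
    have hne : (powersetCard r univ \ 𝒜).Nonempty := by
      rw [← card_pos, card_sdiff_of_subset hsub, card_powersetCard, card_univ]
      omega
    obtain ⟨s, hs, hmin⟩ := exists_min_image _ toColex hne
    rw [mem_sdiff, mem_powersetCard] at hs
    refine ⟨insert s 𝒜, ⟨?_, ?_⟩, card_insert_of_notMem hs.2⟩
    · intro t ht
      obtain rfl | ht := mem_insert.1 ht
      exacts [hs.1.2, h𝒜.1 ht]
    · rintro u t hu ⟨htu, ht⟩
      rw [mem_insert] at hu ⊢
      rcases hu with rfl | hu
      · by_contra! h
        exact (hmin t (by simp [ht, h.2])).not_gt htu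
      · exact Or.inr (h𝒜.2 hu ⟨htu, ht⟩)

theorem card_initSeg_empty : #(initSeg (∅ : Finset α)) = 1 :=
  card_eq_one.2 ⟨∅, by ext t; simp +contextual [eq_comm]⟩

variable [LocallyFiniteOrderBot α] {s : Finset α}

theorem initSeg_subset_powersetCard_Iio {c : α} (h : ∀ b ∈ s, b < c) :
    initSeg s ⊆ powersetCard #s (Iio c) := by
  intro t ht
  rw [mem_initSeg] at ht
  exact mem_powersetCard.2 ⟨fun x hx => mem_Iio.2 (forall_lt_mono ht.2 h x hx), ht.1.symm⟩

theorem initSeg_eq_union (hs : s.Nonempty) :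
    initSeg s = powersetCard #s (Iio (s.max' hs)) ∪
      (initSeg (s.erase (s.max' hs))).image (insert (s.max' hs)) := by
  set M := s.max' hs
  have hMs : M ∈ s := s.max'_mem hs
  have hbelow : ∀ b ∈ s.erase M, b < M := fun b hb =>
    (s.le_max' b (mem_of_mem_erase hb)).lt_of_ne (ne_of_mem_erase hb)
  ext t
  simp only [mem_union, mem_initSeg, mem_powersetCard, mem_image]
  constructor
  · rintro ⟨hcard, hle⟩
    by_cases hMt : M ∈ t
    · right
      refine ⟨t.erase M, ⟨?_, ?_⟩, insert_erase hMt⟩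
      · rw [card_erase_of_mem hMs, card_erase_of_mem hMt, hcard]
      · simpa only [sdiff_singleton_eq_erase] using
          (toColex_sdiff_le_toColex_sdiff (singleton_subset_iff.2 hMt)
            (singleton_subset_iff.2 hMs)).2 hle
    · left
      refine ⟨fun x hx => mem_Iio.2 ?_, hcard.symm⟩
      exact (forall_le_mono hle (fun b hb => s.le_max' b hb) x hx).lt_of_ne
        fun h => hMt (h ▸ hx)
  · rintro (⟨hsub, hcard⟩ | ⟨u, ⟨hucard, hule⟩, rfl⟩)
    · refine ⟨hcard.symm, (toColex_lt_toColex_iff_exists_forall_lt.2 ⟨M, hMs, ?_, ?_⟩).le⟩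
      · exact fun h => (mem_Iio.1 (hsub h)).false
      · exact fun b hb _ => mem_Iio.1 (hsub hb)
    · have huM : M ∉ u := fun h => (forall_lt_mono hule hbelow M h).false
      refine ⟨?_, ?_⟩
      · rw [card_insert_of_notMem huM, ← hucard, card_erase_add_one hMs]
      · rw [← toColex_sdiff_le_toColex_sdiff (singleton_subset_iff.2 (mem_insert_self M u))
          (singleton_subset_iff.2 hMs)]
        simpa only [sdiff_singleton_eq_erase, erase_insert huM] using hule

theorem card_initSeg (hs : s.Nonempty) :
    #(initSeg s) = (#(Iio (s.max' hs))).choose #s + #(initSeg (s.erase (s.max' hs))) := by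
  set M := s.max' hs
  have hbelow : ∀ b ∈ s.erase M, b < M := fun b hb =>
    (s.le_max' b (mem_of_mem_erase hb)).lt_of_ne (ne_of_mem_erase hb)
  have hMnotin : ∀ u ∈ initSeg (s.erase M), M ∉ u := fun u hu h =>
    (forall_lt_mono (mem_initSeg.1 hu).2 hbelow M h).false
  rw [initSeg_eq_union hs, card_union_of_disjoint, card_powersetCard, card_image_of_injOn]
  · intro u hu v hv huv
    rw [← erase_insert (hMnotin u hu), ← erase_insert (hMnotin v hv)]
    exact congrArg (·.erase M) huv
  · refine disjoint_left.2 fun t ht ht' => ?_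
    obtain ⟨u, -, rfl⟩ := mem_image.1 ht'
    exact (mem_Iio.1 ((mem_powersetCard.1 ht).1 (mem_insert_self M u))).false

theorem card_shadow_initSeg (hs : s.Nonempty) (hs₀ : (s.erase (s.max' hs)).Nonempty) :
    #(∂ (initSeg s)) =
      (#(Iio (s.max' hs))).choose (#s - 1) + #(∂ (initSeg (s.erase (s.max' hs)))) := by
  have hmM : s.min' hs < s.max' hs :=
    min'_lt_max'_of_card s (by rw [← card_erase_add_one (s.max'_mem hs)]; simpa using hs₀)
  have hs' : (s.erase (s.min' hs)).Nonempty := ⟨s.max' hs, mem_erase.2 ⟨hmM.ne', s.max'_mem hs⟩⟩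
  have hmax : (s.erase (s.min' hs)).max' hs' = s.max' hs :=
    le_antisymm (max'_subset hs' (erase_subset _ _))
      (le_max' _ _ (mem_erase.2 ⟨hmM.ne', s.max'_mem hs⟩))
  have hmin : (s.erase (s.max' hs)).min' hs₀ = s.min' hs :=
    le_antisymm (min'_le _ _ (mem_erase.2 ⟨hmM.ne, s.min'_mem hs⟩))
      (min'_subset hs₀ (erase_subset _ _))
  rw [shadow_initSeg hs, shadow_initSeg hs₀, card_initSeg hs', hmax, hmin,
    card_erase_of_mem (s.min'_mem hs), erase_right_comm]

theorem shadowBound_initSeg {δ : ℕ} (k : ℕ) {s : Finset α} (hs : #s = k + 1) :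
    ShadowBound k δ #(initSeg s) #(∂ (initSeg s)) := by
  induction k generalizing s with
  | zero =>
    have hne : s.Nonempty := card_pos.1 (by omega)
    have hs₀ : s.erase (s.min' hne) = ∅ := by
      rw [← card_eq_zero, card_erase_of_mem (s.min'_mem hne), hs]
    rw [shadow_initSeg hne, hs₀, card_initSeg_empty]
    exact shadowBound_zero δ _
  | succ k ih =>
    have hne : s.Nonempty := card_pos.1 (by omega)
    have hs₀ : #(s.erase (s.max' hne)) = k + 1 := by
      rw [card_erase_of_mem (s.max'_mem hne), hs, Nat.add_sub_cancel]
    rw [card_shadow_initSeg hne (card_pos.1 (by omega)), card_initSeg hne, hs, Nat.add_sub_cancel]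
    set M := s.max' hne
    have hbelow : ∀ b ∈ s.erase M, b < M := fun b hb =>
      (s.le_max' b (mem_of_mem_erase hb)).lt_of_ne (ne_of_mem_erase hb)
    have hkm : k + 1 ≤ #(Iio M) := hs₀ ▸ card_le_card fun b hb => mem_Iio.2 (hbelow b hb)
    have he₁ : #(initSeg (s.erase M)) ≤ (#(Iio M)).choose (k + 1) := by
      simpa [hs₀] using card_le_card (initSeg_subset_powersetCard_Iio hbelow)
    exact (ih hs₀).succ hkm he₁

end Finset.Colex

open Finset.Colex in
theorem Finset.shadowBound_of_sized_fin {n k δ : ℕ} {𝒜 : Finset (Finset (Fin n))}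
    (h𝒜 : (𝒜 : Set (Finset (Fin n))).Sized (k + 1)) (h𝒜₀ : 𝒜.Nonempty) :
    ShadowBound k δ #𝒜 #(∂ 𝒜) := by
  obtain ⟨𝒞, h𝒞, hcard⟩ := exists_isInitSeg_card h𝒜.card_le
  obtain ⟨s, hs, rfl⟩ := h𝒞.exists_initSeg (card_pos.1 (hcard ▸ card_pos.2 h𝒜₀))
  exact hcard ▸ (shadowBound_initSeg k hs).mono (kruskal_katona h𝒜 hcard.le h𝒞)

theorem Finset.shadow_map {α β : Type*} [DecidableEq α] [DecidableEq β] (f : α ↪ β)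
    (𝒜 : Finset (Finset α)) :
    ∂ (𝒜.map (mapEmbedding f).toEmbedding) = (∂ 𝒜).map (mapEmbedding f).toEmbedding := by
  ext t
  simp only [mem_shadow_iff, mem_map, RelEmbedding.coe_toEmbedding, mapEmbedding_apply]
  constructor
  · rintro ⟨_, ⟨s, hs, rfl⟩, _, hb, rfl⟩
    obtain ⟨a, ha, rfl⟩ := mem_map.1 hb
    exact ⟨s.erase a, ⟨s, hs, a, ha, rfl⟩, map_erase f s a⟩
  · rintro ⟨_, ⟨s, hs, a, ha, rfl⟩, rfl⟩
    exact ⟨s.map f, ⟨s, hs, rfl⟩, f a, mem_map_of_mem f ha, (map_erase f s a).symm⟩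

theorem Finset.exists_map_fin_eq {α : Type*} (G : Finset (Finset α)) :
    ∃ (n : ℕ) (f : Fin n ↪ α) (G' : Finset (Finset (Fin n))),
      G'.map (mapEmbedding f).toEmbedding = G := by
  classical
  set V := G.sup id
  let f : Fin #V ↪ α := V.equivFin.symm.toEmbedding.trans (Function.Embedding.subtype _)
  have hV : univ.map f = V := by
    rw [← map_map, map_univ_equiv, univ_eq_attach, attach_map_val]
  have hG : G ⊆ (univ : Finset (Finset (Fin #V))).map (mapEmbedding f).toEmbedding := by
    intro d hd
    have hdV : d ⊆ univ.map f := by rw [hV]; exact le_sup (f := id) hd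
    obtain ⟨u, -, rfl⟩ := subset_map_iff.1 hdV
    exact mem_map_of_mem _ (mem_univ u)
  obtain ⟨G', -, hG'⟩ := subset_map_iff.1 hG
  exact ⟨_, f, G', hG'.symm⟩

theorem hyperShadow_eq_shadow {α : Type*} [DecidableEq α] {r : ℕ} {G : Finset (Finset α)}
    (hG : (G : Set (Finset α)).Sized (r + 1)) : hyperShadow r G = ∂ G := by
  ext t
  simp only [hyperShadow, mem_sup, mem_powersetCard, mem_shadow_iff_exists_mem_card_add_one]
  constructor
  · rintro ⟨d, hd, htd, rfl⟩
    exact ⟨d, hd, htd, hG hd⟩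
  · rintro ⟨d, hd, htd, hcard⟩
    exact ⟨d, hd, htd, by have := hG hd; omega⟩

theorem f_r_delta_shadow_bound_general {α : Type*} [DecidableEq α]
    (r δ e a : ℕ) (hr : 1 ≤ r) (he : 1 ≤ e) (ha : 1 ≤ a)
    (haineq : a ≤ (r - 1) * (δ - 1) + 1)
    (heineq : e ≤ (r + δ - 1).choose r - a)
    (G : Finset (Finset α))
    (hunif : ∀ d ∈ G, d.card = r)
    (hcard : G.card = e) :
    (a : ℤ) ≤ (δ : ℤ) * (hyperShadow (r - 1) G).card - (r : ℤ) * e := by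
  obtain ⟨k, rfl⟩ : ∃ k, r = k + 1 := ⟨r - 1, by omega⟩
  rw [Nat.add_sub_cancel] at haineq ⊢
  rw [Nat.add_right_comm, Nat.add_sub_cancel] at heineq
  rw [hyperShadow_eq_shadow fun d hd => hunif d hd]
  obtain ⟨n, f, G', rfl⟩ := exists_map_fin_eq G
  have hsized : (G' : Set (Finset (Fin n))).Sized (k + 1) := fun d hd => by
    simpa using hunif _ (mem_map_of_mem (mapEmbedding f).toEmbedding hd)
  rw [card_map] at hcard
  subst hcard
  rw [shadow_map, card_map]
  push_cast
  exact shadowBound_of_sized_fin hsized (card_pos.1 (by omega)) a ha haineq (by omega)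

theorem f_r_delta_shadow_bound {α : Type*} [DecidableEq α]
    (r δ e a : ℕ) (hr : 1 ≤ r) (hδ : 2 ≤ δ) (he : 1 ≤ e) (ha : 1 ≤ a)
    (haineq : a ≤ (r - 1) * (δ - 1) + 1)
    (heineq : e ≤ (r + δ - 1).choose r - a)
    (G : Finset (Finset α))
    (hunif : ∀ d ∈ G, d.card = r)
    (hcard : G.card = e) :
    (a : ℤ) ≤ (δ : ℤ) * (hyperShadow (r - 1) G).card - (r : ℤ) * e :=
  f_r_delta_shadow_bound_general r δ e a hr he ha haineq heineq G hunif hcard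
end
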